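/- arXiv:1911.10779 — 2 statements merged into one kernel-verified Lean document; each statement's English description precedes it below -/
import Mathlib

section
/- Let Φ : D → Dⁿ₁ be a smooth function on a domain D ⊂ D satisfying Φ² = 0, ‖Φ‖² < 0, and ∂Φ/∂t̄ = ∂Φ̄/∂t. Then locally around any point there exists a smooth map x : D₀ → ℝⁿ₁ with Φ = x_u + j x_v, defining a regular time-like surface in isothermal coordinates with E < 0; moreover x is unique up to an additive constant. -/
noncomputable section

/-- The algebra of double numbers `D = {u + j v : j² = 1}`, modeled on `ℝ × ℝ`
(null-basis / idempotent coordinates), with the componentwise ring structure. -/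
abbrev DNum : Type := ℝ × ℝ

namespace DNum

/-- The imaginary unit `j`, with `j * j = 1`. -/
def j : DNum := (-1, 1)

/-- The embedding of `ℝ` into the double numbers. -/
def ofReal (u : ℝ) : DNum := (u, u)

/-- The double number `u + j v`. -/
def mk' (u v : ℝ) : DNum := ofReal u + j * ofReal v

/-- Conjugation `u + j v ↦ u - j v`. -/
def conj (t : DNum) : DNum := (t.2, t.1)

/-- The real part of a double number. -/
def re (t : DNum) : ℝ := (t.1 + t.2) / 2

/-- The imaginary part of a double number. -/
def im (t : DNum) : ℝ := (t.2 - t.1) / 2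

/-- `q = (1 - j)/2`. -/
def q : DNum := (2⁻¹ : ℝ) • ((1 : DNum) - j)

/-- `q̄ = (1 + j)/2`. -/
def qbar : DNum := (2⁻¹ : ℝ) • ((1 : DNum) + j)

/-- `|t|² = t·t̄ = u² - v²`. -/
def absSq (t : DNum) : ℝ := re (t * conj t)

/-- The set `D₊` of positive double numbers `a q + b q̄`, `a > 0`, `b > 0`. -/
def Dpos : Set DNum := {t | ∃ a b : ℝ, 0 < a ∧ 0 < b ∧ t = a • q + b • qbar}

/-- Directional (partial) derivative in direction `w`. -/
def pd {E : Type*} [NormedAddCommGroup E] [NormedSpace ℝ E]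
    (w : ℝ × ℝ) (f : ℝ × ℝ → E) (p : ℝ × ℝ) : E := fderiv ℝ f p w

/-- Partial derivative `∂/∂u`. -/
def pu {E : Type*} [NormedAddCommGroup E] [NormedSpace ℝ E]
    (f : ℝ × ℝ → E) : (ℝ × ℝ) → E := pd ((1 : ℝ), (0 : ℝ)) f

/-- Partial derivative `∂/∂v`. -/
def pv {E : Type*} [NormedAddCommGroup E] [NormedSpace ℝ E]
    (f : ℝ × ℝ → E) : (ℝ × ℝ) → E := pd ((0 : ℝ), (1 : ℝ)) f

/-- `∂f/∂t̄ = (1/2)(∂f/∂u - j ∂f/∂v)` for a `D`-valued function of `t = u + j v`. -/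
def dbar (f : ℝ × ℝ → DNum) (p : ℝ × ℝ) : DNum := (2⁻¹ : ℝ) • (pu f p - j * pv f p)

/-- `∂f/∂t = (1/2)(∂f/∂u + j ∂f/∂v)` for a `D`-valued function of `t = u + j v`. -/
def dt (f : ℝ × ℝ → DNum) (p : ℝ × ℝ) : DNum := (2⁻¹ : ℝ) • (pu f p + j * pv f p)

/-- The Minkowski signature `(-1, 1, …, 1)`. -/
def minkEta (m : ℕ) (i : Fin m) : ℝ := if (i : ℕ) = 0 then -1 else 1

variable {n : ℕ}

/-- The Minkowski scalar product on `ℝⁿ₁`. -/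
def mink (a b : Fin n → ℝ) : ℝ := ∑ i, minkEta n i * (a i * b i)

/-- The `D`-bilinear extension of the Minkowski scalar product to `Dⁿ₁`. -/
def minkD (A B : Fin n → DNum) : DNum := ∑ i, ofReal (minkEta n i) * (A i * B i)

/-- Componentwise conjugation on `Dⁿ₁`. -/
def conjV (A : Fin n → DNum) : Fin n → DNum := fun i => conj (A i)

/-- The (real) squared norm `‖A‖² = A·Ā` on `Dⁿ₁`. -/
def normSqV (A : Fin n → DNum) : ℝ := re (minkD A (conjV A))

/-- `∂/∂t̄` applied componentwise to a `Dⁿ₁`-valued function. -/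
def dbarV (F : ℝ × ℝ → Fin n → DNum) (p : ℝ × ℝ) : Fin n → DNum :=
  fun i => dbar (fun z => F z i) p

/-- `∂/∂t` applied componentwise to a `Dⁿ₁`-valued function. -/
def dtV (F : ℝ × ℝ → Fin n → DNum) (p : ℝ × ℝ) : Fin n → DNum :=
  fun i => dt (fun z => F z i) p

/-- Scalar multiplication of a `Dⁿ₁` vector by a double number. -/
def smulD (c : DNum) (A : Fin n → DNum) : Fin n → DNum := fun i => c * A i

/-- `x_u`. -/
def xu (x : ℝ × ℝ → Fin n → ℝ) : (ℝ × ℝ) → Fin n → ℝ := fun p => pu x p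

/-- `x_v`. -/
def xv (x : ℝ × ℝ → Fin n → ℝ) : (ℝ × ℝ) → Fin n → ℝ := fun p => pv x p

/-- `Φ = x_u + j x_v`. -/
def Phi (x : ℝ × ℝ → Fin n → ℝ) : (ℝ × ℝ) → Fin n → DNum :=
  fun p i => mk' (xu x p i) (xv x p i)

/-- `E = x_u²`. -/
def Efun (x : ℝ × ℝ → Fin n → ℝ) (p : ℝ × ℝ) : ℝ := mink (xu x p) (xu x p)

/-- `F = x_u · x_v`. -/
def Ffun (x : ℝ × ℝ → Fin n → ℝ) (p : ℝ × ℝ) : ℝ := mink (xu x p) (xv x p)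

/-- `G = x_v²`. -/
def Gfun (x : ℝ × ℝ → Fin n → ℝ) (p : ℝ × ℝ) : ℝ := mink (xv x p) (xv x p)

/-- Isothermal coordinates for a time-like surface, with the convention `E < 0`:
`E = -G < 0`, `F = 0`. -/
def Isoth (x : ℝ × ℝ → Fin n → ℝ) (p : ℝ × ℝ) : Prop :=
  Efun x p < 0 ∧ Gfun x p = - Efun x p ∧ Ffun x p = 0

/-- Orthogonal projection onto the normal space (valid in isothermal coordinates,
where `F = 0` and the tangent directions `x_u`, `x_v` are non-null). -/
def perp (x : ℝ × ℝ → Fin n → ℝ) (p : ℝ × ℝ) (w : Fin n → ℝ) : Fin n → ℝ :=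
  w - (mink w (xu x p) / Efun x p) • xu x p - (mink w (xv x p) / Gfun x p) • xv x p

/-- `σ(x_u, x_u) = (x_uu)^⊥`. -/
def sUU (x : ℝ × ℝ → Fin n → ℝ) (p : ℝ × ℝ) : Fin n → ℝ := perp x p (pu (xu x) p)

/-- `σ(x_u, x_v) = (x_uv)^⊥`. -/
def sUV (x : ℝ × ℝ → Fin n → ℝ) (p : ℝ × ℝ) : Fin n → ℝ := perp x p (pv (xu x) p)

/-- `σ(x_v, x_v) = (x_vv)^⊥`. -/
def sVV (x : ℝ × ℝ → Fin n → ℝ) (p : ℝ × ℝ) : Fin n → ℝ := perp x p (pv (xv x) p)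

/-- The mean curvature vector `H = (1/2)(-σ(X₁,X₁) + σ(X₂,X₂))` expressed in
isothermal coordinates: `H = (1/(2E))(σ(x_u,x_u) - σ(x_v,x_v))`. -/
def Hmean (x : ℝ × ℝ → Fin n → ℝ) (p : ℝ × ℝ) : Fin n → ℝ :=
  (1 / (2 * Efun x p)) • (sUU x p - sVV x p)

/-- The Gauss curvature of a minimal time-like surface in isothermal coordinates:
`K = -σ²(X₁,X₁) + σ²(X₁,X₂) = (-σ²(x_u,x_u) + σ²(x_u,x_v))/E²`. -/
def Kgauss (x : ℝ × ℝ → Fin n → ℝ) (p : ℝ × ℝ) : ℝ :=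
  (-(mink (sUU x p) (sUU x p)) + mink (sUV x p) (sUV x p)) / (Efun x p) ^ 2

/-- `Φ′ = ∂Φ/∂t`. -/
def PhiP (x : ℝ × ℝ → Fin n → ℝ) : (ℝ × ℝ) → Fin n → DNum := fun p => dtV (Phi x) p

/-- The normal projection `Φ′^⊥ = Φ′ - ((Φ′·Φ̄)/‖Φ‖²) Φ`. -/
def PhiPperp (x : ℝ × ℝ → Fin n → ℝ) (p : ℝ × ℝ) : Fin n → DNum :=
  fun i => PhiP x p i -
    (minkD (PhiP x p) (conjV (Phi x p)) * ofReal (normSqV (Phi x p))⁻¹) * Phi x p i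

/-- `σ(x_u,x_u) + j σ(x_u,x_v)` (which equals `Φ′^⊥` on a minimal surface). -/
def SigmaJ (x : ℝ × ℝ → Fin n → ℝ) (p : ℝ × ℝ) : Fin n → DNum :=
  fun i => mk' (sUU x p i) (sUV x p i)

/-- `σ(a x_u + b x_v, c x_u + d x_v)` by bilinearity. -/
def sigComb (x : ℝ × ℝ → Fin n → ℝ) (p : ℝ × ℝ) (a b c d : ℝ) : Fin n → ℝ :=
  (a * c) • sUU x p + (a * d + b * c) • sUV x p + (b * d) • sVV x p

/-- `(a x_u + b x_v, c x_u + d x_v)` is an orthonormal tangent frame with `X₁² = -1`. -/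
def OrthFrame (x : ℝ × ℝ → Fin n → ℝ) (p : ℝ × ℝ) (a b c d : ℝ) : Prop :=
  mink (a • xu x p + b • xv x p) (a • xu x p + b • xv x p) = -1 ∧
  mink (c • xu x p + d • xv x p) (c • xu x p + d • xv x p) = 1 ∧
  mink (a • xu x p + b • xv x p) (c • xu x p + d • xv x p) = 0

end DNum

open DNum


section AuxForStmt10

open Metric MeasureTheory intervalIntegral Set Asymptotics Interval

namespace StmtAux

set_option linter.unusedSectionVars false

variable {E : Type*} [NormedAddCommGroup E] [NormedSpace ℝ E] [CompleteSpace E]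

lemma clm_ext_R2 {L L' : ℝ × ℝ →L[ℝ] E} (h1 : L (1,0) = L' (1,0))
    (h2 : L (0,1) = L' (0,1)) : L = L' := by
  apply ContinuousLinearMap.ext
  intro v
  have hv : (v : ℝ × ℝ) = v.1 • ((1:ℝ),(0:ℝ)) + v.2 • ((0:ℝ),(1:ℝ)) := by
    simp [Prod.ext_iff]
  rw [hv]; simp only [map_add, ContinuousLinearMap.map_smul, h1, h2]

set_option maxHeartbeats 1000000 in
set_option synthInstance.maxHeartbeats 200000 in
lemma exists_primitive (A B : ℝ × ℝ → E) (A' B' : ℝ × ℝ → (ℝ × ℝ) →L[ℝ] E)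
    (t₀ : ℝ × ℝ) (r : ℝ) (hr : 0 < r)
    (hA : ∀ p ∈ ball t₀ r, HasFDerivAt A (A' p) p)
    (hB : ∀ p ∈ ball t₀ r, HasFDerivAt B (B' p) p)
    (hB' : ContinuousOn B' (ball t₀ r))
    (hcl : ∀ p ∈ ball t₀ r, A' p (0,1) = B' p (1,0)) :
    ∃ x : ℝ × ℝ → E, ∀ p ∈ ball t₀ r,
      HasFDerivAt x ((ContinuousLinearMap.fst ℝ ℝ ℝ).smulRight (A p)
        + (ContinuousLinearMap.snd ℝ ℝ ℝ).smulRight (B p)) p := by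
  classical
  set S := ball t₀ r with hSdef
  have hSball : S = ball t₀.1 r ×ˢ ball t₀.2 r := by
    rw [hSdef, ← ball_prod_same]
  have memS : ∀ {q : ℝ × ℝ}, q ∈ S → q.1 ∈ ball t₀.1 r ∧ q.2 ∈ ball t₀.2 r := by
    intro q hq; rw [hSball] at hq; exact ⟨hq.1, hq.2⟩
  have memS' : ∀ {a b : ℝ}, a ∈ ball t₀.1 r → b ∈ ball t₀.2 r → (a, b) ∈ S := by
    intro a b ha hb; rw [hSball]; exact ⟨ha, hb⟩
  have contA : ContinuousOn A S := fun q hq => ((hA q hq).continuousAt).continuousWithinAt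
  have contB : ContinuousOn B S := fun q hq => ((hB q hq).continuousAt).continuousWithinAt
  have uIccSub : ∀ {c d : ℝ}, c ∈ ball t₀.2 r → d ∈ ball t₀.2 r → uIcc c d ⊆ ball t₀.2 r :=
    fun hc hd => ((convex_ball _ _).ordConnected).uIcc_subset hc hd
  -- integrability of vertical slices
  have intB : ∀ (c : ℝ), c ∈ ball t₀.1 r → ∀ (d e : ℝ), d ∈ ball t₀.2 r → e ∈ ball t₀.2 r →
      IntervalIntegrable (fun s => B (c, s)) volume d e := by
    intro c hc d e hd he
    apply ContinuousOn.intervalIntegrable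
    apply contB.comp (by fun_prop : Continuous fun s : ℝ => (c, s)).continuousOn
    intro s hs
    exact memS' hc (uIccSub hd he hs)
  -- the candidate primitive
  refine ⟨fun w => (∫ s in t₀.1..w.1, A (s, t₀.2)) + ∫ s in t₀.2..w.2, B (w.1, s), ?_⟩
  intro p hp
  have hp1 : p.1 ∈ ball t₀.1 r := (memS hp).1
  have hp2 : p.2 ∈ ball t₀.2 r := (memS hp).2
  set ε := (r - dist p t₀) / 2 with hεdef
  have hdist : dist p t₀ < r := mem_ball.1 hp
  have hε : 0 < ε := by unfold ε; linarith
  have hdist2 : dist p t₀ = r - 2 * ε := by unfold ε; ring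
  -- the compact rectangle K
  set a : ℝ := min t₀.2 (p.2 - ε) with hadef
  set b : ℝ := max t₀.2 (p.2 + ε) with hbdef
  set K : Set (ℝ × ℝ) := closedBall p.1 ε ×ˢ Icc a b with hKdef
  have hd1 : dist p.1 t₀.1 ≤ r - 2 * ε := by
    rw [← hdist2]; rw [Prod.dist_eq]; exact le_max_left _ _
  have hd2 : dist p.2 t₀.2 ≤ r - 2 * ε := by
    rw [← hdist2]; rw [Prod.dist_eq]; exact le_max_right _ _
  have hd2' : |p.2 - t₀.2| ≤ r - 2 * ε := by rwa [Real.dist_eq] at hd2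
  have hd2'' : t₀.2 - (r - 2*ε) ≤ p.2 ∧ p.2 ≤ t₀.2 + (r - 2*ε) := by
    constructor <;> [skip; skip] <;> cases' abs_le.1 hd2' with h1 h2 <;> linarith
  have ha_lt : t₀.2 - r < a := lt_min (by linarith) (by linarith [hd2''.1])
  have hb_lt : b < t₀.2 + r := max_lt (by linarith) (by linarith [hd2''.2])
  have hKS : K ⊆ S := by
    rintro ⟨q1, q2⟩ ⟨hq1, hq2⟩
    simp only [mem_closedBall] at hq1
    apply memS'
    · have h3 : dist q1 t₀.1 ≤ dist q1 p.1 + dist p.1 t₀.1 := dist_triangle _ _ _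
      rw [mem_ball]
      linarith
    · rw [mem_ball, Real.dist_eq, abs_lt]
      exact ⟨by linarith [hq2.1], by linarith [hq2.2]⟩
  have hK : IsCompact K := (isCompact_closedBall _ _).prod isCompact_Icc
  have hballK : closedBall p ε ⊆ K := by
    intro q hq
    rw [← closedBall_prod_same] at hq
    refine ⟨hq.1, ?_⟩
    have h2 : q.2 ∈ closedBall p.2 ε := hq.2
    rw [Real.closedBall_eq_Icc] at h2
    exact ⟨le_trans (min_le_right _ _) h2.1, le_trans h2.2 (le_max_right _ _)⟩
  have hballS : closedBall p ε ⊆ S := fun q hq => hKS (hballK hq)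
  have hK2 : ∀ q1 ∈ closedBall p.1 ε, ∀ s ∈ uIcc t₀.2 p.2, (q1, s) ∈ K := by
    intro q1 hq1 s hs
    refine ⟨hq1, ?_⟩
    rcases hs with ⟨h1, h2⟩
    constructor
    · exact le_trans (min_le_min (le_refl _) (by linarith)) h1
    · exact le_trans h2 (max_le_max (le_refl _) (by linarith))
  obtain ⟨M, hM⟩ : ∃ M, ∀ q ∈ K, ‖B' q‖ ≤ M :=
    hK.exists_bound_of_continuousOn (hB'.mono hKS)
  have hM0 : 0 ≤ M :=
    le_trans (norm_nonneg _) (hM p (hballK (mem_closedBall_self hε.le)))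
  -- piece G : w ↦ ∫_{t₀.1}^{w.1} A (s, t₀.2)
  have contA1 : ContinuousOn (fun s : ℝ => A (s, t₀.2)) (ball t₀.1 r) := by
    apply contA.comp (by fun_prop : Continuous fun s : ℝ => (s, t₀.2)).continuousOn
    intro s hs; exact memS' hs (mem_ball_self hr)
  have hφg : HasDerivAt (fun y => ∫ s in t₀.1..y, A (s, t₀.2)) (A (p.1, t₀.2)) p.1 := by
    apply intervalIntegral.integral_hasDerivAt_right
    · apply ContinuousOn.intervalIntegrable
      apply contA1.mono
      exact ((convex_ball _ _).ordConnected).uIcc_subset (mem_ball_self hr) hp1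
    · exact contA1.stronglyMeasurableAtFilter isOpen_ball p.1 hp1
    · exact contA1.continuousAt (isOpen_ball.mem_nhds hp1)
  have hG : HasFDerivAt (fun w : ℝ × ℝ => ∫ s in t₀.1..w.1, A (s, t₀.2))
      ((ContinuousLinearMap.fst ℝ ℝ ℝ).smulRight (A (p.1, t₀.2))) p := by
    have h := (hasDerivAt_iff_hasFDerivAt.1 hφg).comp p hasFDerivAt_fst
    have heq : (ContinuousLinearMap.fst ℝ ℝ ℝ).smulRight (A (p.1, t₀.2))
        = ((1 : ℝ →L[ℝ] ℝ).smulRight (A (p.1, t₀.2))).comp (ContinuousLinearMap.fst ℝ ℝ ℝ) := by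
      apply clm_ext_R2 <;> simp
    rw [heq]; exact h
  -- piece R₁ : w ↦ ∫_{t₀.2}^{w.2} B (p.1, s)
  have contB1 : ContinuousOn (fun s : ℝ => B (p.1, s)) (ball t₀.2 r) := by
    apply contB.comp (by fun_prop : Continuous fun s : ℝ => (p.1, s)).continuousOn
    intro s hs; exact memS' hp1 hs
  have hφ1 : HasDerivAt (fun y => ∫ s in t₀.2..y, B (p.1, s)) (B (p.1, p.2)) p.2 := by
    apply intervalIntegral.integral_hasDerivAt_right
    · exact intB p.1 hp1 t₀.2 p.2 (mem_ball_self hr) hp2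
    · exact contB1.stronglyMeasurableAtFilter isOpen_ball p.2 hp2
    · exact contB1.continuousAt (isOpen_ball.mem_nhds hp2)
  have hR1 : HasFDerivAt (fun w : ℝ × ℝ => ∫ s in t₀.2..w.2, B (p.1, s))
      ((ContinuousLinearMap.snd ℝ ℝ ℝ).smulRight (B (p.1, p.2))) p := by
    have h := (hasDerivAt_iff_hasFDerivAt.1 hφ1).comp p hasFDerivAt_snd
    have heq : (ContinuousLinearMap.snd ℝ ℝ ℝ).smulRight (B (p.1, p.2))
        = ((1 : ℝ →L[ℝ] ℝ).smulRight (B (p.1, p.2))).comp (ContinuousLinearMap.snd ℝ ℝ ℝ) := by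
      apply clm_ext_R2 <;> simp
    rw [heq]; exact h
  -- membership helper
  have memK' : ∀ {w : ℝ × ℝ}, w ∈ ball p ε → ∀ {t : ℝ}, t ∈ Ι t₀.2 p.2 → (w.1, t) ∈ K := by
    intro w hw t ht
    apply hK2
    · rw [mem_closedBall]
      refine le_trans ?_ (le_of_lt (mem_ball.1 hw))
      rw [Prod.dist_eq]; exact le_max_left _ _
    · exact uIoc_subset_uIcc ht
  have memball1 : ∀ {w : ℝ × ℝ}, w ∈ ball p ε → w.1 ∈ ball t₀.1 r ∧ w.2 ∈ ball t₀.2 r :=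
    fun hw => memS (hballS (ball_subset_closedBall hw))
  -- piece R₃
  have hR3 : HasFDerivAt (fun w : ℝ × ℝ => ∫ s in t₀.2..p.2, (B (w.1, s) - B (p.1, s)))
      (∫ s in t₀.2..p.2, (ContinuousLinearMap.fst ℝ ℝ ℝ).smulRight ((B' (p.1, s)) (1, 0))) p := by
    apply intervalIntegral.hasFDerivAt_integral_of_dominated_of_fderiv_le
      (F := fun (w : ℝ × ℝ) (t : ℝ) => B (w.1, t) - B (p.1, t))
      (F' := fun (w : ℝ × ℝ) (t : ℝ) =>
        (ContinuousLinearMap.fst ℝ ℝ ℝ).smulRight ((B' (w.1, t)) (1, 0)))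
      (bound := fun _ => M) (ball_mem_nhds p hε)
    · filter_upwards [ball_mem_nhds p hε] with w hw
      apply ContinuousOn.aestronglyMeasurable ?_ measurableSet_uIoc
      apply ContinuousOn.sub
      · apply (contB.comp (by fun_prop : Continuous fun s : ℝ => (w.1, s)).continuousOn)
        intro s hs
        exact memS' (memball1 hw).1 (uIccSub (mem_ball_self hr) hp2 (uIoc_subset_uIcc hs))
      · apply (contB.comp (by fun_prop : Continuous fun s : ℝ => (p.1, s)).continuousOn)
        intro s hs
        exact memS' hp1 (uIccSub (mem_ball_self hr) hp2 (uIoc_subset_uIcc hs))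
    · simp only [sub_self]; exact intervalIntegrable_const
    · have c2 : ContinuousOn (fun t : ℝ => (B' (p.1, t)) ((1:ℝ), (0:ℝ))) (Ι t₀.2 p.2) := by
        apply ContinuousOn.clm_apply ?_ continuousOn_const
        apply (hB'.comp (by fun_prop : Continuous fun s : ℝ => (p.1, s)).continuousOn)
        intro s hs
        exact memS' hp1 (uIccSub (mem_ball_self hr) hp2 (uIoc_subset_uIcc hs))
      have c3 : ContinuousOn (fun t : ℝ =>
          (ContinuousLinearMap.fst ℝ ℝ ℝ).smulRight ((B' (p.1, t)) ((1:ℝ), (0:ℝ))))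
          (Ι t₀.2 p.2) :=
        ((ContinuousLinearMap.smulRightL ℝ (ℝ × ℝ) E
          (ContinuousLinearMap.fst ℝ ℝ ℝ)).continuous.comp_continuousOn c2)
      exact c3.aestronglyMeasurable measurableSet_uIoc
    · refine ae_of_all _ fun t ht w hw => ?_
      apply ContinuousLinearMap.opNorm_le_bound _ hM0
      intro δ
      rw [ContinuousLinearMap.smulRight_apply]
      have h1 : ‖(ContinuousLinearMap.fst ℝ ℝ ℝ) δ • (B' (w.1, t)) ((1:ℝ), (0:ℝ))‖
          = |δ.1| * ‖(B' (w.1, t)) ((1:ℝ), (0:ℝ))‖ := by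
        rw [norm_smul]; simp [Real.norm_eq_abs]
      rw [h1]
      have h2 : ‖(B' (w.1, t)) ((1:ℝ), (0:ℝ))‖ ≤ M := by
        refine le_trans ((B' (w.1, t)).le_opNorm _) ?_
        have hn : ‖((1:ℝ), (0:ℝ))‖ = 1 := by
          simp [Prod.norm_def]
        rw [hn, mul_one]
        exact hM _ (memK' hw ht)
      have h3 : |δ.1| ≤ ‖δ‖ := norm_fst_le δ
      calc |δ.1| * ‖(B' (w.1, t)) ((1:ℝ), (0:ℝ))‖ ≤ ‖δ‖ * M :=
            mul_le_mul h3 h2 (norm_nonneg _) (norm_nonneg _)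
        _ = M * ‖δ‖ := mul_comm _ _
    · exact intervalIntegrable_const
    · refine ae_of_all _ fun t ht w hw => ?_
      have hwS : (w.1, t) ∈ S := hKS (memK' hw ht)
      have hcurve : HasFDerivAt (fun w : ℝ × ℝ => (w.1, t))
          ((ContinuousLinearMap.fst ℝ ℝ ℝ).prod 0) w :=
        hasFDerivAt_fst.prodMk (hasFDerivAt_const t w)
      have h := ((hB _ hwS).comp w hcurve).sub_const (B (p.1, t))
      have heq : (ContinuousLinearMap.fst ℝ ℝ ℝ).smulRight ((B' (w.1, t)) (1, 0))
          = (B' (w.1, t)).comp ((ContinuousLinearMap.fst ℝ ℝ ℝ).prod 0) := by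
        apply clm_ext_R2 <;>
          simp [ContinuousLinearMap.comp_apply, ContinuousLinearMap.prod_apply,
            Prod.mk_zero_zero]
      rw [heq]; exact h
  -- identify the R₃ derivative
  have c2' : ContinuousOn (fun t : ℝ => (B' (p.1, t)) ((1:ℝ), (0:ℝ))) (uIcc t₀.2 p.2) := by
    apply ContinuousOn.clm_apply ?_ continuousOn_const
    apply (hB'.comp (by fun_prop : Continuous fun s : ℝ => (p.1, s)).continuousOn)
    intro s hs
    exact memS' hp1 (uIccSub (mem_ball_self hr) hp2 hs)
  have hint : IntervalIntegrable (fun t : ℝ => (B' (p.1, t)) ((1:ℝ), (0:ℝ)))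
      volume t₀.2 p.2 := c2'.intervalIntegrable
  have hI : (∫ s in t₀.2..p.2, (ContinuousLinearMap.fst ℝ ℝ ℝ).smulRight ((B' (p.1, s)) (1, 0)))
      = (ContinuousLinearMap.fst ℝ ℝ ℝ).smulRight
          (∫ s in t₀.2..p.2, (B' (p.1, s)) ((1:ℝ), (0:ℝ))) :=
    (ContinuousLinearMap.smulRightL ℝ (ℝ × ℝ) E
      (ContinuousLinearMap.fst ℝ ℝ ℝ)).intervalIntegral_comp_comm hint
  have hFTC : (∫ s in t₀.2..p.2, (B' (p.1, s)) ((1:ℝ), (0:ℝ)))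
      = A (p.1, p.2) - A (p.1, t₀.2) := by
    apply intervalIntegral.integral_eq_sub_of_hasDerivAt
      (f := fun t : ℝ => A (p.1, t)) ?_ hint
    intro t ht
    have htS : (p.1, t) ∈ S := memS' hp1 (uIccSub (mem_ball_self hr) hp2 ht)
    have hcurve : HasDerivAt (fun t : ℝ => ((p.1 : ℝ), t)) ((0:ℝ), (1:ℝ)) t :=
      (hasDerivAt_const t p.1).prodMk (hasDerivAt_id t)
    have h := (hA _ htS).comp_hasDerivAt t hcurve
    rw [← hcl _ htS]
    exact h
  have hR3' : HasFDerivAt (fun w : ℝ × ℝ => ∫ s in t₀.2..p.2, (B (w.1, s) - B (p.1, s)))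
      ((ContinuousLinearMap.fst ℝ ℝ ℝ).smulRight (A (p.1, p.2) - A (p.1, t₀.2))) p := by
    rw [← hFTC, ← hI]; exact hR3
  -- piece R₄ : has zero derivative
  have hR4 : HasFDerivAt (fun w : ℝ × ℝ => ∫ s in p.2..w.2, (B (w.1, s) - B (p.1, s)))
      (0 : ℝ × ℝ →L[ℝ] E) p := by
    rw [hasFDerivAt_iff_isLittleO_nhds_zero]
    rw [isLittleO_iff]
    intro c hc
    have hδ : 0 < min ε (c / (M + 1)) := lt_min hε (div_pos hc (by linarith))
    filter_upwards [ball_mem_nhds (0 : ℝ × ℝ) hδ] with h hh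
    rw [mem_ball, dist_zero_right] at hh
    have hhε : ‖h‖ < ε := lt_of_lt_of_le hh (min_le_left _ _)
    have hhc : ‖h‖ ≤ c / (M + 1) := le_of_lt (lt_of_lt_of_le hh (min_le_right _ _))
    have h1n : |h.1| ≤ ‖h‖ := norm_fst_le h
    have h2n : |h.2| ≤ ‖h‖ := norm_snd_le h
    have key : ∀ s ∈ Ι p.2 (p + h).2, ‖B ((p + h).1, s) - B (p.1, s)‖ ≤ M * ‖h‖ := by
      intro s hs
      have hs2 : (p + h).2 = p.2 + h.2 := rfl
      rw [hs2] at hs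
      have hs' : |s - p.2| ≤ |h.2| := by
        rcases le_total p.2 (p.2 + h.2) with hle | hle
        · rw [Set.uIoc_of_le hle] at hs
          rw [abs_le]
          constructor
          · linarith [hs.1, abs_nonneg h.2]
          · linarith [hs.2, le_abs_self h.2]
        · rw [Set.uIoc_of_ge hle] at hs
          rw [abs_le]
          constructor
          · linarith [hs.1, neg_abs_le h.2]
          · linarith [hs.2, abs_nonneg h.2]
      have hsmem : ∀ z : ℝ, |z - p.1| ≤ ε → (z, s) ∈ closedBall p ε := by
        intro z hz
        rw [← closedBall_prod_same]
        constructor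
        · rw [mem_closedBall, Real.dist_eq]; exact hz
        · rw [mem_closedBall, Real.dist_eq]
          exact le_trans hs' (le_trans h2n hhε.le)
      have hy : ((p + h).1, s) ∈ closedBall p ε := by
        apply hsmem
        have : (p + h).1 - p.1 = h.1 := by simp
        rw [this]
        exact le_trans h1n hhε.le
      have hx : (p.1, s) ∈ closedBall p ε := by
        apply hsmem; simp [hε.le]
      have hmv := (convex_closedBall p ε).norm_image_sub_le_of_norm_hasFDerivWithin_le
        (f := B) (f' := B') (C := M)
        (fun q hq => (hB q (hballS hq)).hasFDerivWithinAt)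
        (fun q hq => hM q (hballK hq)) hx hy
      refine le_trans hmv ?_
      have hd : ‖(((p + h).1 : ℝ), s) - ((p.1 : ℝ), s)‖ = |h.1| := by
        have : (((p + h).1 : ℝ), s) - ((p.1 : ℝ), s) = ((h.1 : ℝ), (0 : ℝ)) := by
          simp [Prod.ext_iff]
        rw [this, Prod.norm_def]
        simp [Real.norm_eq_abs]
      rw [hd]
      exact mul_le_mul_of_nonneg_left (le_trans h1n (le_refl _)) hM0 |>.trans
        (mul_le_mul_of_nonneg_left (le_refl _) hM0)
    have hbound := intervalIntegral.norm_integral_le_of_norm_le_const key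
    simp only [intervalIntegral.integral_same, sub_zero, ContinuousLinearMap.zero_apply,
      sub_zero]
    have hs2 : (p + h).2 - p.2 = h.2 := by simp
    rw [hs2] at hbound
    refine le_trans hbound ?_
    have step1 : M * ‖h‖ * |h.2| ≤ M * ‖h‖ * ‖h‖ :=
      mul_le_mul_of_nonneg_left h2n (by positivity)
    refine le_trans step1 ?_
    have step2 : M * ‖h‖ ≤ c := by
      have := mul_le_mul_of_nonneg_left hhc hM0
      have hMc : M * (c / (M + 1)) ≤ c := by
        rw [div_eq_mul_inv]
        rw [show M * (c * (M + 1)⁻¹) = c * (M * (M + 1)⁻¹) by ring]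
        have hfrac : M * (M + 1)⁻¹ ≤ 1 := by
          rw [← div_eq_mul_inv, div_le_one (by linarith)]; linarith
        calc c * (M * (M + 1)⁻¹) ≤ c * 1 := by
              apply mul_le_mul_of_nonneg_left hfrac hc.le
          _ = c := mul_one c
      linarith
    exact mul_le_mul_of_nonneg_right step2 (norm_nonneg _)
  -- assemble
  have hsum : HasFDerivAt (fun w : ℝ × ℝ =>
      (∫ s in t₀.1..w.1, A (s, t₀.2)) + ((∫ s in t₀.2..w.2, B (p.1, s)) +
        ((∫ s in t₀.2..p.2, (B (w.1, s) - B (p.1, s)))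
          + ∫ s in p.2..w.2, (B (w.1, s) - B (p.1, s)))))
      (((ContinuousLinearMap.fst ℝ ℝ ℝ).smulRight (A (p.1, t₀.2)))
        + (((ContinuousLinearMap.snd ℝ ℝ ℝ).smulRight (B (p.1, p.2)))
          + (((ContinuousLinearMap.fst ℝ ℝ ℝ).smulRight (A (p.1, p.2) - A (p.1, t₀.2)))
            + (0 : ℝ × ℝ →L[ℝ] E)))) p :=
    hG.add (hR1.add (hR3'.add hR4))
  have hDeq : (((ContinuousLinearMap.fst ℝ ℝ ℝ).smulRight (A (p.1, t₀.2)))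
        + (((ContinuousLinearMap.snd ℝ ℝ ℝ).smulRight (B (p.1, p.2)))
          + (((ContinuousLinearMap.fst ℝ ℝ ℝ).smulRight (A (p.1, p.2) - A (p.1, t₀.2)))
            + (0 : ℝ × ℝ →L[ℝ] E))))
      = ((ContinuousLinearMap.fst ℝ ℝ ℝ).smulRight (A p)
        + (ContinuousLinearMap.snd ℝ ℝ ℝ).smulRight (B p)) := by
    have hpe : (p.1, p.2) = p := rfl
    apply clm_ext_R2 <;> simp [hpe] <;> abel
  rw [hDeq] at hsum
  have hev : (fun w : ℝ × ℝ =>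
        (∫ s in t₀.1..w.1, A (s, t₀.2)) + ∫ s in t₀.2..w.2, B (w.1, s))
      =ᶠ[nhds p] (fun w : ℝ × ℝ =>
      (∫ s in t₀.1..w.1, A (s, t₀.2)) + ((∫ s in t₀.2..w.2, B (p.1, s)) +
        ((∫ s in t₀.2..p.2, (B (w.1, s) - B (p.1, s)))
          + ∫ s in p.2..w.2, (B (w.1, s) - B (p.1, s))))) := by
    filter_upwards [ball_mem_nhds p hε] with w hw
    have hw1 : w.1 ∈ ball t₀.1 r := (memball1 hw).1
    have hw2 : w.2 ∈ ball t₀.2 r := (memball1 hw).2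
    congr 1
    have i1 : IntervalIntegrable (fun s => B (w.1, s)) volume t₀.2 w.2 :=
      intB _ hw1 _ _ (mem_ball_self hr) hw2
    have i2 : IntervalIntegrable (fun s => B (p.1, s)) volume t₀.2 w.2 :=
      intB _ hp1 _ _ (mem_ball_self hr) hw2
    have i3 : IntervalIntegrable (fun s => B (w.1, s) - B (p.1, s)) volume t₀.2 p.2 :=
      (intB _ hw1 _ _ (mem_ball_self hr) hp2).sub (intB _ hp1 _ _ (mem_ball_self hr) hp2)
    have i4 : IntervalIntegrable (fun s => B (w.1, s) - B (p.1, s)) volume p.2 w.2 :=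
      (intB _ hw1 _ _ hp2 hw2).sub (intB _ hp1 _ _ hp2 hw2)
    rw [intervalIntegral.integral_add_adjacent_intervals i3 i4]
    rw [← intervalIntegral.integral_add i2 (i1.sub i2)]
    apply intervalIntegral.integral_congr
    intro s _
    module
  exact hsum.congr_of_eventuallyEq hev

end StmtAux

namespace StmtAux

open DNum

def reL : DNum →L[ℝ] ℝ :=
  (2⁻¹ : ℝ) • (ContinuousLinearMap.fst ℝ ℝ ℝ + ContinuousLinearMap.snd ℝ ℝ ℝ)

def imL : DNum →L[ℝ] ℝ :=
  (2⁻¹ : ℝ) • (ContinuousLinearMap.snd ℝ ℝ ℝ - ContinuousLinearMap.fst ℝ ℝ ℝ)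

lemma reL_apply (t : DNum) : reL t = (t.1 + t.2) / 2 := by
  simp [reL]; ring

lemma imL_apply (t : DNum) : imL t = (t.2 - t.1) / 2 := by
  simp [imL]; ring

def conjL : DNum →L[ℝ] DNum :=
  (ContinuousLinearMap.snd ℝ ℝ ℝ).prod (ContinuousLinearMap.fst ℝ ℝ ℝ)

lemma conjL_apply (t : DNum) : conjL t = conj t := rfl

def reV (n : ℕ) : (Fin n → DNum) →L[ℝ] (Fin n → ℝ) :=
  ContinuousLinearMap.pi fun i => reL.comp (ContinuousLinearMap.proj i)

def imV (n : ℕ) : (Fin n → DNum) →L[ℝ] (Fin n → ℝ) :=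
  ContinuousLinearMap.pi fun i => imL.comp (ContinuousLinearMap.proj i)

lemma reV_apply {n : ℕ} (A : Fin n → DNum) (i : Fin n) : reV n A i = (A i).1 / 2 + (A i).2 / 2 := by
  simp [reV, reL]; ring

lemma imV_apply {n : ℕ} (A : Fin n → DNum) (i : Fin n) : imV n A i = (A i).2 / 2 - (A i).1 / 2 := by
  simp [imV, imL]; ring

lemma mk'_fst (u v : ℝ) : (mk' u v).1 = u - v := by
  simp [mk', ofReal, j, Prod.ext_iff]; ring

lemma mk'_snd (u v : ℝ) : (mk' u v).2 = u + v := by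
  simp [mk', ofReal, j, Prod.ext_iff]

lemma mk'_re_im (t : DNum) : mk' ((t.1 + t.2) / 2) ((t.2 - t.1) / 2) = t := by
  refine Prod.ext ?_ ?_
  · rw [mk'_fst]; ring
  · rw [mk'_snd]; ring

end StmtAux

namespace StmtAux
open DNum

lemma closed_of_h3 {n : ℕ} (Φ : ℝ × ℝ → Fin n → DNum) (p : ℝ × ℝ)
    (hΦ : HasFDerivAt Φ (fderiv ℝ Φ p) p)
    (h3p : dbarV Φ p = dtV (fun z => conjV (Φ z)) p) :
    ((reV n).comp (fderiv ℝ Φ p)) (0, 1) = ((imV n).comp (fderiv ℝ Φ p)) (1, 0) := by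
  funext i
  have hfd : fderiv ℝ (fun z => Φ z i) p
      = (ContinuousLinearMap.proj i).comp (fderiv ℝ Φ p) :=
    ((ContinuousLinearMap.proj (R := ℝ) (φ := fun _ : Fin n => DNum) i).hasFDerivAt.comp
      p hΦ).fderiv
  have hfd2 : fderiv ℝ (fun z => conj (Φ z i)) p
      = (conjL.comp (ContinuousLinearMap.proj i)).comp (fderiv ℝ Φ p) :=
    ((conjL.comp
      (ContinuousLinearMap.proj (R := ℝ) (φ := fun _ : Fin n => DNum) i)).hasFDerivAt.comp
      p hΦ).fderiv
  have h := congrFun h3p i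
  simp only [dbarV, dtV, dbar, dt, pu, pv, pd, conjV] at h
  rw [hfd, hfd2] at h
  set a : DNum := (fderiv ℝ Φ p) (1, 0) i with ha
  set b : DNum := (fderiv ℝ Φ p) (0, 1) i with hb
  simp only [ContinuousLinearMap.comp_apply, ContinuousLinearMap.proj_apply,
    conjL_apply] at h
  have h1 := congrArg Prod.fst h
  simp only [Prod.smul_fst, Prod.fst_sub, Prod.fst_add, Prod.fst_mul, conj, j,
    smul_eq_mul] at h1
  -- h1 should be an equation in reals
  have goal1 : ((reV n) ((fderiv ℝ Φ p) (0, 1))) i = b.1 / 2 + b.2 / 2 := by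
    rw [reV_apply]
  have goal2 : ((imV n) ((fderiv ℝ Φ p) (1, 0))) i = a.2 / 2 - a.1 / 2 := by
    rw [imV_apply]
  simp only [ContinuousLinearMap.comp_apply]
  rw [goal1, goal2]
  linarith [h1]

end StmtAux

namespace StmtAux
open DNum

lemma minkD_fst {n : ℕ} (A B : Fin n → DNum) :
    (minkD A B).1 = ∑ i, minkEta n i * ((A i).1 * (B i).1) := by
  unfold minkD
  rw [Prod.fst_sum]
  refine Finset.sum_congr rfl fun i _ => ?_
  simp [ofReal, Prod.fst_mul]

lemma minkD_snd {n : ℕ} (A B : Fin n → DNum) :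
    (minkD A B).2 = ∑ i, minkEta n i * ((A i).2 * (B i).2) := by
  unfold minkD
  rw [Prod.snd_sum]
  refine Finset.sum_congr rfl fun i _ => ?_
  simp [ofReal, Prod.snd_mul]

lemma normSqV_eq {n : ℕ} (A : Fin n → DNum) :
    normSqV A = ∑ i, minkEta n i * ((A i).1 * (A i).2) := by
  unfold normSqV re
  rw [minkD_fst, minkD_snd]
  have e1 : ∑ i, minkEta n i * ((A i).1 * ((conjV A) i).1)
      = ∑ i, minkEta n i * ((A i).1 * (A i).2) :=
    Finset.sum_congr rfl fun i _ => by simp only [conjV, conj]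
  have e2 : ∑ i, minkEta n i * ((A i).2 * ((conjV A) i).2)
      = ∑ i, minkEta n i * ((A i).1 * (A i).2) :=
    Finset.sum_congr rfl fun i _ => by simp only [conjV, conj]; ring
  rw [e1, e2]
  ring

end StmtAux


end AuxForStmt10

/-- A smooth `Φ : D → Dⁿ₁` with `Φ² = 0`, `‖Φ‖² < 0` and `∂Φ/∂t̄ = ∂Φ̄/∂t`
locally arises as `Φ = x_u + j x_v` of a regular time-like surface in isothermal
coordinates with `E < 0`, and `x` is unique up to an additive constant. -/
theorem stmt10 (n : ℕ) (U : Set (ℝ × ℝ)) (hU : IsOpen U)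
    (Φ : ℝ × ℝ → Fin n → DNum) (hsm : ContDiffOn ℝ (⊤ : ℕ∞) Φ U)
    (h1 : ∀ p ∈ U, minkD (Φ p) (Φ p) = 0)
    (h2 : ∀ p ∈ U, normSqV (Φ p) < 0)
    (h3 : ∀ p ∈ U, dbarV Φ p = dtV (fun z => conjV (Φ z)) p)
    (t₀ : ℝ × ℝ) (ht₀ : t₀ ∈ U) :
    ∃ U₀ : Set (ℝ × ℝ), IsOpen U₀ ∧ U₀ ⊆ U ∧ t₀ ∈ U₀ ∧ IsConnected U₀ ∧
      (∃ x : ℝ × ℝ → Fin n → ℝ, ∀ p ∈ U₀, Phi x p = Φ p ∧ Isoth x p) ∧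
      (∀ x y : ℝ × ℝ → Fin n → ℝ,
        (∀ p ∈ U₀, Phi x p = Φ p) → (∀ p ∈ U₀, Phi y p = Φ p) →
        ∃ c : Fin n → ℝ, ∀ p ∈ U₀, y p = x p + c) := by
  classical
  obtain ⟨r, hr, hrU⟩ : ∃ r > 0, Metric.ball t₀ r ⊆ U := Metric.isOpen_iff.1 hU t₀ ht₀
  have hΦdiff : ∀ p ∈ U, HasFDerivAt Φ (fderiv ℝ Φ p) p := fun p hp =>
    ((hsm.contDiffAt (hU.mem_nhds hp)).differentiableAt (by simp)).hasFDerivAt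
  set A : ℝ × ℝ → Fin n → ℝ := fun p => StmtAux.reV n (Φ p) with hAdef
  set B : ℝ × ℝ → Fin n → ℝ := fun p => StmtAux.imV n (Φ p) with hBdef
  set A' : ℝ × ℝ → (ℝ × ℝ) →L[ℝ] (Fin n → ℝ) :=
    fun p => (StmtAux.reV n).comp (fderiv ℝ Φ p) with hA'def
  set B' : ℝ × ℝ → (ℝ × ℝ) →L[ℝ] (Fin n → ℝ) :=
    fun p => (StmtAux.imV n).comp (fderiv ℝ Φ p) with hB'def
  have hAd : ∀ p ∈ Metric.ball t₀ r, HasFDerivAt A (A' p) p := fun p hp =>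
    (StmtAux.reV n).hasFDerivAt.comp p (hΦdiff p (hrU hp))
  have hBd : ∀ p ∈ Metric.ball t₀ r, HasFDerivAt B (B' p) p := fun p hp =>
    (StmtAux.imV n).hasFDerivAt.comp p (hΦdiff p (hrU hp))
  have hfcont : ContinuousOn (fderiv ℝ Φ) U := hsm.continuousOn_fderiv_of_isOpen hU (by simp)
  have hB'c : ContinuousOn B' (Metric.ball t₀ r) := by
    apply ContinuousOn.mono ?_ hrU
    exact ((ContinuousLinearMap.compL ℝ (ℝ × ℝ) (Fin n → DNum) (Fin n → ℝ)
      (StmtAux.imV n)).continuous.comp_continuousOn hfcont)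
  have hclosed : ∀ p ∈ Metric.ball t₀ r, A' p (0, 1) = B' p (1, 0) := fun p hp =>
    StmtAux.closed_of_h3 Φ p (hΦdiff p (hrU hp)) (h3 p (hrU hp))
  obtain ⟨x₀, hx₀⟩ := StmtAux.exists_primitive A B A' B' t₀ r hr hAd hBd hB'c hclosed
  have hApi : ∀ p i, A p i = ((Φ p i).1 + (Φ p i).2) / 2 := by
    intro p i
    simp only [hAdef, StmtAux.reV_apply]
    ring
  have hBpi : ∀ p i, B p i = ((Φ p i).2 - (Φ p i).1) / 2 := by
    intro p i
    simp only [hBdef, StmtAux.imV_apply]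
    ring
  refine ⟨Metric.ball t₀ r, Metric.isOpen_ball, hrU, Metric.mem_ball_self hr,
    ⟨⟨t₀, Metric.mem_ball_self hr⟩, (convex_ball t₀ r).isPreconnected⟩, ?_, ?_⟩
  · -- existence of x₀ with Phi x₀ = Φ and isothermal coordinates
    refine ⟨x₀, fun p hp => ?_⟩
    have hd := hx₀ p hp
    have hxu : xu x₀ p = A p := by
      have e : xu x₀ p = fderiv ℝ x₀ p (1, 0) := rfl
      rw [e, hd.fderiv]
      simp
    have hxv : xv x₀ p = B p := by
      have e : xv x₀ p = fderiv ℝ x₀ p (0, 1) := rfl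
      rw [e, hd.fderiv]
      simp
    have hpU := hrU hp
    have hf : ∑ i, minkEta n i * ((Φ p i).1 * (Φ p i).1) = 0 := by
      have h := congrArg Prod.fst (h1 p hpU)
      rwa [StmtAux.minkD_fst] at h
    have hg : ∑ i, minkEta n i * ((Φ p i).2 * (Φ p i).2) = 0 := by
      have h := congrArg Prod.snd (h1 p hpU)
      rwa [StmtAux.minkD_snd] at h
    have hfg : ∑ i, minkEta n i * ((Φ p i).1 * (Φ p i).2) < 0 := by
      have h := h2 p hpU
      rwa [StmtAux.normSqV_eq] at h
    have hE : Efun x₀ p = 2⁻¹ * ∑ i, minkEta n i * ((Φ p i).1 * (Φ p i).2) := by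
      unfold Efun mink
      rw [hxu]
      have e : ∀ i, minkEta n i * (A p i * A p i)
          = minkEta n i * ((Φ p i).1 * (Φ p i).1) / 4
            + minkEta n i * ((Φ p i).1 * (Φ p i).2) / 2
            + minkEta n i * ((Φ p i).2 * (Φ p i).2) / 4 := by
        intro i
        rw [hApi p i]
        ring
      rw [Finset.sum_congr rfl fun i _ => e i, Finset.sum_add_distrib, Finset.sum_add_distrib,
        ← Finset.sum_div, ← Finset.sum_div, ← Finset.sum_div, hf, hg]
      ring
    have hGf : Gfun x₀ p = -(2⁻¹ * ∑ i, minkEta n i * ((Φ p i).1 * (Φ p i).2)) := by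
      unfold Gfun mink
      rw [hxv]
      have e : ∀ i, minkEta n i * (B p i * B p i)
          = minkEta n i * ((Φ p i).1 * (Φ p i).1) / 4
            - minkEta n i * ((Φ p i).1 * (Φ p i).2) / 2
            + minkEta n i * ((Φ p i).2 * (Φ p i).2) / 4 := by
        intro i
        rw [hBpi p i]
        ring
      have e2 : ∀ i, minkEta n i * (B p i * B p i)
          = (minkEta n i * ((Φ p i).1 * (Φ p i).1) / 4
              + minkEta n i * ((Φ p i).2 * (Φ p i).2) / 4)
            - minkEta n i * ((Φ p i).1 * (Φ p i).2) / 2 := by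
        intro i
        rw [e i]
        ring
      rw [Finset.sum_congr rfl fun i _ => e2 i, Finset.sum_sub_distrib, Finset.sum_add_distrib,
        ← Finset.sum_div, ← Finset.sum_div, ← Finset.sum_div, hf, hg]
      ring
    have hFf : Ffun x₀ p = 0 := by
      unfold Ffun mink
      rw [hxu, hxv]
      have e : ∀ i, minkEta n i * (A p i * B p i)
          = minkEta n i * ((Φ p i).2 * (Φ p i).2) / 4
            - minkEta n i * ((Φ p i).1 * (Φ p i).1) / 4 := by
        intro i
        rw [hApi p i, hBpi p i]
        ring
      rw [Finset.sum_congr rfl fun i _ => e i, Finset.sum_sub_distrib,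
        ← Finset.sum_div, ← Finset.sum_div, hf, hg]
      ring
    constructor
    · funext i
      show DNum.mk' (xu x₀ p i) (xv x₀ p i) = Φ p i
      rw [hxu, hxv]
      have e1 : A p i = ((Φ p i).1 + (Φ p i).2) / 2 := hApi p i
      have e2 : B p i = ((Φ p i).2 - (Φ p i).1) / 2 := hBpi p i
      rw [e1, e2, StmtAux.mk'_re_im]
    · refine ⟨by rw [hE]; linarith, by rw [hGf, hE], by rw [hFf]⟩
  · -- uniqueness up to a constant
    intro xf yf hxf hyf
    have key : ∀ z : ℝ × ℝ → Fin n → ℝ, (∀ p ∈ Metric.ball t₀ r, Phi z p = Φ p) →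
        ∀ p ∈ Metric.ball t₀ r, HasFDerivAt z
          ((ContinuousLinearMap.fst ℝ ℝ ℝ).smulRight (A p)
            + (ContinuousLinearMap.snd ℝ ℝ ℝ).smulRight (B p)) p := by
      intro z hz p hp
      have hΦp := hz p hp
      have hpU := hrU hp
      have hdiff : DifferentiableAt ℝ z p := by
        by_contra hnd
        have h0 : fderiv ℝ z p = 0 := fderiv_zero_of_not_differentiableAt hnd
        have hzero : Φ p = fun _ => (0 : DNum) := by
          rw [← hΦp]
          funext i
          show DNum.mk' (xu z p i) (xv z p i) = 0
          have e1 : xu z p = fderiv ℝ z p (1, 0) := rfl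
          have e2 : xv z p = fderiv ℝ z p (0, 1) := rfl
          have hz1 : xu z p i = 0 := by rw [e1, h0]; rfl
          have hz2 : xv z p i = 0 := by rw [e2, h0]; rfl
          rw [hz1, hz2]
          refine Prod.ext ?_ ?_
          · rw [StmtAux.mk'_fst]; norm_num
          · rw [StmtAux.mk'_snd]; norm_num
        have h2p := h2 p hpU
        rw [hzero, StmtAux.normSqV_eq] at h2p
        simp at h2p
      have hu : fderiv ℝ z p (1, 0) = A p := by
        funext i
        have h := congrFun hΦp i
        simp only [Phi] at h
        have h1c := congrArg Prod.fst h
        have h2c := congrArg Prod.snd h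
        rw [StmtAux.mk'_fst] at h1c
        rw [StmtAux.mk'_snd] at h2c
        have exu : fderiv ℝ z p ((1 : ℝ), (0 : ℝ)) i = xu z p i := rfl
        rw [exu, hApi p i]
        linarith
      have hv : fderiv ℝ z p (0, 1) = B p := by
        funext i
        have h := congrFun hΦp i
        simp only [Phi] at h
        have h1c := congrArg Prod.fst h
        have h2c := congrArg Prod.snd h
        rw [StmtAux.mk'_fst] at h1c
        rw [StmtAux.mk'_snd] at h2c
        have exv : fderiv ℝ z p ((0 : ℝ), (1 : ℝ)) i = xv z p i := rfl
        rw [exv, hBpi p i]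
        linarith
      have hfz : fderiv ℝ z p = (ContinuousLinearMap.fst ℝ ℝ ℝ).smulRight (A p)
          + (ContinuousLinearMap.snd ℝ ℝ ℝ).smulRight (B p) := by
        apply StmtAux.clm_ext_R2
        · rw [hu]; simp
        · rw [hv]; simp
      rw [← hfz]
      exact hdiff.hasFDerivAt
    refine ⟨fun i => yf t₀ i - xf t₀ i, fun p hp => ?_⟩
    have hd0 : ∀ q ∈ Metric.ball t₀ r, HasFDerivAt (fun w => yf w - xf w)
        (0 : (ℝ × ℝ) →L[ℝ] (Fin n → ℝ)) q := by
      intro q hq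
      have h := (key yf hyf q hq).sub (key xf hxf q hq)
      simpa using h
    have hmv := (convex_ball t₀ r).norm_image_sub_le_of_norm_hasFDerivWithin_le
      (f' := fun _ => (0 : (ℝ × ℝ) →L[ℝ] (Fin n → ℝ))) (C := 0)
      (fun q hq => (hd0 q hq).hasFDerivWithinAt) (fun q hq => by simp)
      (Metric.mem_ball_self hr) hp
    have hzz : yf p - xf p = yf t₀ - xf t₀ := by
      have h0 : ‖(yf p - xf p) - (yf t₀ - xf t₀)‖ ≤ 0 := by simpa using hmv
      exact sub_eq_zero.1 (norm_le_zero_iff.1 h0)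
    funext i
    have h := congrFun hzz i
    simp only [Pi.sub_apply, Pi.add_apply] at h ⊢
    linarith
end
end

section
/- A time-like surface M = (D, x) in ℝⁿ₁ given in isothermal coordinates with E < 0 satisfies: Φ is D-holomorphic ⟺ x is hyperbolically harmonic (Δʰx = 0) ⟺ M is minimal (H = 0). In fact ∂Φ/∂t̄ = (1/2)Δʰx = E·H. -/
noncomputable section

namespace DNum

variable {n : ℕ}

lemma mk'_pair (u v : ℝ) : mk' u v = (u - v, u + v) := by
  simp [mk', ofReal, j, Prod.ext_iff]; constructor <;> ring

lemma ofReal_eq_zero {r : ℝ} : ofReal r = 0 ↔ r = 0 := by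
  simp [ofReal, Prod.ext_iff]

lemma mink_comm (a b : Fin n → ℝ) : mink a b = mink b a := by
  simp [mink, mul_comm]

lemma pd_eval (F : ℝ × ℝ → Fin n → ℝ) (p w : ℝ × ℝ)
    (hF : DifferentiableAt ℝ F p) (i : Fin n) :
    pd w F p i = pd w (fun z => F z i) p := by
  simp [pd, fderiv_pi (differentiableAt_pi.mp hF)]

lemma pd_mink (F G : ℝ × ℝ → Fin n → ℝ) (p w : ℝ × ℝ)
    (hF : DifferentiableAt ℝ F p) (hG : DifferentiableAt ℝ G p) :
    pd w (fun z => mink (F z) (G z)) p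
      = mink (pd w F p) (G p) + mink (F p) (pd w G p) := by
  have hFi := differentiableAt_pi.mp hF
  have hGi := differentiableAt_pi.mp hG
  unfold mink pd
  rw [fderiv_fun_sum (fun i _ => ((hFi i).fun_mul (hGi i)).const_mul _)]
  rw [ContinuousLinearMap.sum_apply, ← Finset.sum_add_distrib]
  refine Finset.sum_congr rfl fun i _ => ?_
  rw [fderiv_const_mul ((hFi i).fun_mul (hGi i)), fderiv_fun_mul (hFi i) (hGi i)]
  have e1 : fderiv ℝ (fun z => F z i) p w = (fderiv ℝ F p w) i := by
    simp [fderiv_pi hFi]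
  have e2 : fderiv ℝ (fun z => G z i) p w = (fderiv ℝ G p w) i := by
    simp [fderiv_pi hGi]
  simp only [ContinuousLinearMap.smul_apply, ContinuousLinearMap.add_apply, smul_eq_mul]
  rw [e1, e2]; ring

lemma contDiffAt_pdx (x : ℝ × ℝ → Fin n → ℝ) (p w : ℝ × ℝ)
    (hx : ContDiffAt ℝ (⊤ : ℕ∞) x p) : ContDiffAt ℝ (⊤ : ℕ∞) (pd w x) p := by
  have h1 : ContDiffAt ℝ (⊤ : ℕ∞) (fderiv ℝ x) p := hx.fderiv_right (by simp)
  have h2 : ContDiff ℝ (⊤ : ℕ∞) (fun L : (ℝ × ℝ) →L[ℝ] (Fin n → ℝ) => L w) :=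
    (ContinuousLinearMap.apply ℝ (Fin n → ℝ) w).contDiff
  exact (h2.contDiffAt).comp p h1

lemma pd_pd (x : ℝ × ℝ → Fin n → ℝ) (p v w : ℝ × ℝ)
    (hx : ContDiffAt ℝ (⊤ : ℕ∞) x p) :
    pd v (pd w x) p = fderiv ℝ (fderiv ℝ x) p v w := by
  have h1 : ContDiffAt ℝ (⊤ : ℕ∞) (fderiv ℝ x) p := hx.fderiv_right (by simp)
  have hd : DifferentiableAt ℝ (fderiv ℝ x) p := h1.differentiableAt (by simp)
  have : pd w x = fun z => (fderiv ℝ x z) w := rfl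
  rw [this]
  show fderiv ℝ (fun z => (fderiv ℝ x z) ((fun _ => w) z)) p v = _
  rw [fderiv_clm_apply hd (differentiableAt_const w)]
  simp

lemma clairaut (x : ℝ × ℝ → Fin n → ℝ) (p : ℝ × ℝ)
    (hx : ContDiffAt ℝ (⊤ : ℕ∞) x p) :
    pv (xu x) p = pu (xv x) p := by
  have hsym : IsSymmSndFDerivAt ℝ x p := hx.isSymmSndFDerivAt (by simp; exact WithTop.coe_le_coe.mpr le_top)
  show pd ((0:ℝ),(1:ℝ)) (pd ((1:ℝ),(0:ℝ)) x) p = pd ((1:ℝ),(0:ℝ)) (pd ((0:ℝ),(1:ℝ)) x) p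
  rw [pd_pd x p _ _ hx, pd_pd x p _ _ hx]
  exact hsym _ _

end DNum

open DNum

/-- For a time-like surface in isothermal coordinates with `E < 0`:
`∂Φ/∂t̄ = (1/2)Δʰx = E·H`, and the conditions "`Φ` is holomorphic",
"`x` is hyperbolically harmonic" and "`M` is minimal (`H = 0`)" are equivalent. -/
theorem stmt11 (n : ℕ) (x : ℝ × ℝ → Fin n → ℝ) (U : Set (ℝ × ℝ)) (hU : IsOpen U)
    (hsm : ContDiffOn ℝ (⊤ : ℕ∞) x U) (hiso : ∀ p ∈ U, Isoth x p) :
    (∀ p ∈ U, dbarV (Phi x) p = fun i => ofReal (2⁻¹ * (pu (xu x) p i - pv (xv x) p i))) ∧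
    (∀ p ∈ U, dbarV (Phi x) p = fun i => ofReal (Efun x p * Hmean x p i)) ∧
    ((∀ p ∈ U, dbarV (Phi x) p = 0) ↔ (∀ p ∈ U, pu (xu x) p - pv (xv x) p = 0)) ∧
    ((∀ p ∈ U, dbarV (Phi x) p = 0) ↔ (∀ p ∈ U, Hmean x p = 0)) := by
  classical
  -- pointwise setup
  have setup : ∀ p ∈ U,
      (dbarV (Phi x) p = fun i => ofReal (2⁻¹ * (pu (xu x) p i - pv (xv x) p i))) ∧
      (Efun x p • Hmean x p = fun i => 2⁻¹ * (pu (xu x) p i - pv (xv x) p i)) := by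
    intro p hp
    have hmem : U ∈ nhds p := hU.mem_nhds hp
    have hx : ContDiffAt ℝ (⊤ : ℕ∞) x p := hsm.contDiffAt hmem
    have hxU : ∀ q ∈ U, ContDiffAt ℝ (⊤ : ℕ∞) x q := fun q hq => hsm.contDiffAt (hU.mem_nhds hq)
    have hdxu : DifferentiableAt ℝ (xu x) p := (contDiffAt_pdx x p _ hx).differentiableAt (by simp)
    have hdxv : DifferentiableAt ℝ (xv x) p := (contDiffAt_pdx x p _ hx).differentiableAt (by simp)
    have hC : pv (xu x) p = pu (xv x) p := clairaut x p hx
    -- abbreviations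
    set u := xu x p with hu
    set v := xv x p with hv
    set xuu := pu (xu x) p with hxuu
    set xuv := pv (xu x) p with hxuv
    set xvv := pv (xv x) p with hxvv
    -- derivatives of E, F, G
    have pdE : ∀ w, pd w (Efun x) p = mink (pd w (xu x) p) u + mink u (pd w (xu x) p) := by
      intro w
      exact pd_mink (xu x) (xu x) p w hdxu hdxu
    have pdG : ∀ w, pd w (Gfun x) p = mink (pd w (xv x) p) v + mink v (pd w (xv x) p) := by
      intro w
      exact pd_mink (xv x) (xv x) p w hdxv hdxv
    have pdF : ∀ w, pd w (Ffun x) p = mink (pd w (xu x) p) v + mink u (pd w (xv x) p) := by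
      intro w
      exact pd_mink (xu x) (xv x) p w hdxu hdxv
    have hF0 : ∀ w, pd w (Ffun x) p = 0 := by
      intro w
      have heq : Ffun x =ᶠ[nhds p] fun _ => (0:ℝ) :=
        Filter.eventuallyEq_of_mem hmem (fun q hq => (hiso q hq).2.2)
      show fderiv ℝ (Ffun x) p w = 0
      rw [heq.fderiv_eq, fderiv_fun_const]
      simp
    have hGE : ∀ w, pd w (Gfun x) p = - pd w (Efun x) p := by
      intro w
      have heq : Gfun x =ᶠ[nhds p] fun q => - Efun x q :=
        Filter.eventuallyEq_of_mem hmem (fun q hq => (hiso q hq).2.1)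
      show fderiv ℝ (Gfun x) p w = _
      rw [heq.fderiv_eq]
      have : fderiv ℝ (fun q => - Efun x q) p = - fderiv ℝ (Efun x) p := fderiv_neg
      rw [this]; rfl
    -- the four tangency identities
    have e1 : pd ((1:ℝ),(0:ℝ)) (Efun x) p = mink xuu u + mink u xuu := pdE _
    have e2 : pd ((0:ℝ),(1:ℝ)) (Efun x) p = mink xuv u + mink u xuv := pdE _
    have g1 : pd ((1:ℝ),(0:ℝ)) (Gfun x) p = mink xuv v + mink v xuv := by
      have := pdG ((1:ℝ),(0:ℝ))
      rwa [show pd ((1:ℝ),(0:ℝ)) (xv x) p = xuv from hC.symm] at this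
    have g2 : pd ((0:ℝ),(1:ℝ)) (Gfun x) p = mink xvv v + mink v xvv := pdG _
    have f1 : mink xuu v + mink u xuv = 0 := by
      have := pdF ((1:ℝ),(0:ℝ))
      rw [hF0] at this
      rw [show pd ((1:ℝ),(0:ℝ)) (xv x) p = xuv from hC.symm,
        show pd ((1:ℝ),(0:ℝ)) (xu x) p = xuu from hxuu.symm] at this
      linarith [this.symm]
    have f2 : mink xuv v + mink u xvv = 0 := by
      have := pdF ((0:ℝ),(1:ℝ))
      rw [hF0] at this
      rw [show pd ((0:ℝ),(1:ℝ)) (xu x) p = xuv from hxuv.symm,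
        show pd ((0:ℝ),(1:ℝ)) (xv x) p = xvv from hxvv.symm] at this
      linarith [this.symm]
    have h1 : mink xuu u = mink xvv u := by
      have hg := hGE ((1:ℝ),(0:ℝ))
      rw [g1, e1] at hg
      have c1 := mink_comm xuu u
      have c2 := mink_comm xuv v
      have c3 := mink_comm xvv u
      have c4 := mink_comm u xvv
      linarith
    have h2 : mink xuu v = mink xvv v := by
      have hg := hGE ((0:ℝ),(1:ℝ))
      rw [g2, e2] at hg
      have c1 := mink_comm xuv u
      have c2 := mink_comm xvv v
      have c3 := mink_comm u xuv
      linarith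
    -- sUU - sVV = xuu - xvv
    have hE : Efun x p < 0 := (hiso p hp).1
    have hEne : Efun x p ≠ 0 := ne_of_lt hE
    have hGval : Gfun x p = - Efun x p := (hiso p hp).2.1
    have hGne : Gfun x p ≠ 0 := by rw [hGval]; exact neg_ne_zero.mpr hEne
    have hdiff : sUU x p - sVV x p = xuu - xvv := by
      funext i
      have mu1 : mink xuu u / Efun x p = mink xvv u / Efun x p := by rw [h1]
      have mv1 : mink xuu v / Gfun x p = mink xvv v / Gfun x p := by rw [h2]
      simp only [sUU, sVV, perp, Pi.sub_apply, Pi.smul_apply, smul_eq_mul]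
      rw [show pu (xu x) p = xuu from rfl, show pv (xv x) p = xvv from rfl, ← hu, ← hv,
        mu1, mv1]
      ring
    have hscal : Efun x p • Hmean x p = fun i => 2⁻¹ * (xuu i - xvv i) := by
      funext i
      simp only [Hmean, Pi.smul_apply, smul_eq_mul, hdiff, Pi.sub_apply]
      field_simp
    refine ⟨?_, hscal⟩
    -- dbar computation
    funext i
    have hdxui := differentiableAt_pi.mp hdxu i
    have hdxvi := differentiableAt_pi.mp hdxv i
    have hPhi : (fun z => Phi x z i) = fun z => ((xu x z i - xv x z i, xu x z i + xv x z i) : DNum) := by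
      funext z
      simp [Phi, mk'_pair]
    have hfd : HasFDerivAt (fun z => ((xu x z i - xv x z i, xu x z i + xv x z i) : ℝ × ℝ))
        ((fderiv ℝ (fun z => xu x z i) p - fderiv ℝ (fun z => xv x z i) p).prod
         (fderiv ℝ (fun z => xu x z i) p + fderiv ℝ (fun z => xv x z i) p)) p := by
      exact ((hdxui.hasFDerivAt.sub hdxvi.hasFDerivAt).prodMk
        (hdxui.hasFDerivAt.add hdxvi.hasFDerivAt))
    have hAu : fderiv ℝ (fun z => xu x z i) p ((1:ℝ),(0:ℝ)) = xuu i := by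
      exact (pd_eval (xu x) p _ hdxu i).symm
    have hAv : fderiv ℝ (fun z => xu x z i) p ((0:ℝ),(1:ℝ)) = xuv i := by
      exact (pd_eval (xu x) p _ hdxu i).symm
    have hBu : fderiv ℝ (fun z => xv x z i) p ((1:ℝ),(0:ℝ)) = xuv i := by
      rw [hC]; exact (pd_eval (xv x) p _ hdxv i).symm
    have hBv : fderiv ℝ (fun z => xv x z i) p ((0:ℝ),(1:ℝ)) = xvv i := by
      exact (pd_eval (xv x) p _ hdxv i).symm
    show dbar (fun z => Phi x z i) p = ofReal (2⁻¹ * (xuu i - xvv i))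
    rw [hPhi]
    unfold dbar pu pv pd
    rw [hfd.fderiv]
    simp only [ContinuousLinearMap.prod_apply, ContinuousLinearMap.sub_apply,
      ContinuousLinearMap.add_apply, hAu, hAv, hBu, hBv]
    simp only [j, ofReal, Prod.mk_mul_mk, Prod.mk_sub_mk, Prod.smul_mk, smul_eq_mul,
      Prod.ext_iff]
    constructor <;> ring
  obtain ⟨k1, k2⟩ : (∀ p ∈ U, dbarV (Phi x) p = fun i => ofReal (2⁻¹ * (pu (xu x) p i - pv (xv x) p i))) ∧
      (∀ p ∈ U, Efun x p • Hmean x p = fun i => 2⁻¹ * (pu (xu x) p i - pv (xv x) p i)) :=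
    ⟨fun p hp => (setup p hp).1, fun p hp => (setup p hp).2⟩
  have key2 : ∀ p ∈ U, dbarV (Phi x) p = fun i => ofReal (Efun x p * Hmean x p i) := by
    intro p hp
    rw [k1 p hp]
    funext i
    congr 1
    have := congrFun (k2 p hp) i
    simp only [Pi.smul_apply, smul_eq_mul] at this
    rw [this]
  refine ⟨k1, key2, ?_, ?_⟩
  · constructor
    · intro h p hp
      have h1 := (k1 p hp).symm.trans (h p hp)
      funext i
      have := congrFun h1 i
      rw [show (0 : Fin n → DNum) i = 0 from rfl, ofReal_eq_zero] at this
      simp only [Pi.sub_apply, Pi.zero_apply]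
      linarith
    · intro h p hp
      rw [k1 p hp]
      funext i
      have := congrFun (h p hp) i
      simp only [Pi.sub_apply, Pi.zero_apply] at this
      simp [this, ofReal_eq_zero]
  · constructor
    · intro h p hp
      have hEne : Efun x p ≠ 0 := ne_of_lt (hiso p hp).1
      have h1 := (key2 p hp).symm.trans (h p hp)
      funext i
      have := congrFun h1 i
      rw [show (0 : Fin n → DNum) i = 0 from rfl, ofReal_eq_zero] at this
      have := mul_eq_zero.mp this
      tauto
    · intro h p hp
      rw [key2 p hp]
      funext i
      rw [h p hp]
      simp [ofReal_eq_zero]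
end
end
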